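/- arXiv:2303.04461 — 2 statements merged into one kernel-verified Lean document; each statement's English description precedes it below -/
import Mathlib

section
/- Let A be a perfect evolution algebra (A² = A). If I is a maximal ideal of A, then there exists a maximal hereditary subset H of the vertex set of the associated graph such that I = I_H; moreover H = H_I. -/
/-!
In a natural basis, `a * e i = aᵢ • e i ^ 2`. Hence an ideal `I` containing `x` with `xᵢ ≠ 0`
contains `e i ^ 2`, so `H_I` is hereditary and `I ≤ I_{H_I}`. Conversely, if `e i ^ 2 ∈ I` but
`e i ∉ I`, every product with a factor in `I + K e i` lies in `I`; maximality forces
`I + K e i = A`, so `A² ≤ I`, contradicting perfection. Thus `I = I_{H_I}`, and since `H ↦ I_H`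
is monotone, injective and sends hereditary sets to ideals, maximality of `I` passes to `H_I`.
-/

variable {K ι A : Type*}

section Defs
variable [Field K] [NonUnitalNonAssocCommRing A] [Module K A]
  [SMulCommClass K A A] [IsScalarTower K A A]

/-- A natural basis: distinct basis elements multiply to zero. -/
def IsNaturalBasis (b : Module.Basis ι K A) : Prop := ∀ i j : ι, i ≠ j → b i * b j = 0

/-- Edge i → j in the associated graph: the j-th coordinate of (b i)² is nonzero. -/
def EvolEdge (b : Module.Basis ι K A) (i j : ι) : Prop := b.repr (b i * b i) j ≠ 0

/-- Hereditary subset of vertices: closed under edges (hence under reachability). -/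
def EvolHereditary (b : Module.Basis ι K A) (H : Set ι) : Prop :=
  ∀ i ∈ H, ∀ j, EvolEdge b i j → j ∈ H

/-- Saturated subset: a regular vertex all of whose edge-targets lie in H belongs to H. -/
def EvolSaturated (b : Module.Basis ι K A) (H : Set ι) : Prop :=
  ∀ i : ι, b i * b i ≠ 0 → (∀ j, EvolEdge b i j → j ∈ H) → i ∈ H

/-- Ideal of a (nonunital, nonassociative, commutative) algebra: a submodule absorbing
multiplication. -/
def IsEvolIdeal (I : Submodule K A) : Prop := ∀ a : A, ∀ x ∈ I, a * x ∈ I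

/-- I_H, the span of the basis elements indexed by H. -/
def idealOf (b : Module.Basis ι K A) (H : Set ι) : Submodule K A := Submodule.span K (b '' H)

/-- H_I = {e ∈ B : e² ∈ I}. -/
def hSet (b : Module.Basis ι K A) (I : Submodule K A) : Set ι := {i | b i * b i ∈ I}

/-- Maximal ideal. -/
def IsMaxIdeal (I : Submodule K A) : Prop :=
  IsEvolIdeal I ∧ I ≠ ⊤ ∧
    ∀ J : Submodule K A, IsEvolIdeal J → I ≤ J → J = I ∨ J = ⊤

/-- Absorption property of an ideal. -/
def Absorption (I : Submodule K A) : Prop := ∀ x : A, (∀ a : A, x * a ∈ I) → x ∈ I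

end Defs

/-- A², the span of all products. -/
def sqIdeal (K A : Type*) [Field K] [NonUnitalNonAssocCommRing A] [Module K A] :
    Submodule K A :=
  Submodule.span K {x : A | ∃ a c : A, x = a * c}

variable [Field K] [NonUnitalNonAssocCommRing A] [Module K A]
  [SMulCommClass K A A] [IsScalarTower K A A]

section idealOf

omit [SMulCommClass K A A] [IsScalarTower K A A]

variable (b : Module.Basis ι K A)

theorem idealOf_mono {H H' : Set ι} (h : H ⊆ H') : idealOf b H ≤ idealOf b H' :=
  Submodule.span_mono (Set.image_mono h)

theorem idealOf_univ : idealOf b Set.univ = ⊤ := by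
  rw [idealOf, Set.image_univ, b.span_eq]

theorem basis_mem_idealOf_iff {H : Set ι} {i : ι} : b i ∈ idealOf b H ↔ i ∈ H :=
  b.self_mem_span_image

theorem idealOf_injective : Function.Injective (idealOf b) := fun H H' h => by
  ext i
  rw [← basis_mem_idealOf_iff b, h, basis_mem_idealOf_iff]

theorem mul_self_mem_idealOf {H : Set ι} (hH : EvolHereditary b H) {i : ι} (hi : i ∈ H) :
    b i * b i ∈ idealOf b H := by
  rw [idealOf, Module.Basis.mem_span_image]
  intro j hj
  exact hH i hi j (by simpa [EvolEdge] using hj)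

end idealOf

omit [SMulCommClass K A A] in
theorem IsNaturalBasis.mul_basis {b : Module.Basis ι K A} (hb : IsNaturalBasis b) (a : A)
    (i : ι) : a * b i = b.repr a i • (b i * b i) := by
  have : LinearMap.mulRight K (b i) = LinearMap.smulRight (b.coord i) (b i * b i) := by
    refine b.ext fun j => ?_
    by_cases h : j = i
    · subst h
      simp [Module.Basis.coord_apply, Module.Basis.repr_self]
    · simp [hb j i h, Module.Basis.coord_apply, h]
  simpa using LinearMap.congr_fun this a

theorem isEvolIdeal_idealOf {b : Module.Basis ι K A} (hb : IsNaturalBasis b) {H : Set ι}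
    (hH : EvolHereditary b H) : IsEvolIdeal (idealOf b H) := by
  intro a x hx
  induction hx using Submodule.span_induction with
  | mem _ hx =>
    obtain ⟨i, hi, rfl⟩ := hx
    rw [hb.mul_basis]
    exact Submodule.smul_mem _ _ (mul_self_mem_idealOf b hH hi)
  | zero => simp
  | add x y _ _ hx hy => rw [mul_add]; exact Submodule.add_mem _ hx hy
  | smul c x _ hx => rw [mul_smul_comm]; exact Submodule.smul_mem _ _ hx

section hSet

omit [SMulCommClass K A A]

variable {b : Module.Basis ι K A} (hb : IsNaturalBasis b) {I : Submodule K A}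
include hb

theorem mul_self_mem_of_repr_ne_zero (hI : IsEvolIdeal I) {x : A} (hx : x ∈ I) {i : ι}
    (hxi : b.repr x i ≠ 0) : b i * b i ∈ I := by
  have h : x * b i ∈ I := mul_comm (b i) x ▸ hI _ _ hx
  rw [hb.mul_basis] at h
  simpa [smul_smul, inv_mul_cancel₀ hxi] using I.smul_mem (b.repr x i)⁻¹ h

theorem evolHereditary_hSet (hI : IsEvolIdeal I) : EvolHereditary b (hSet b I) :=
  fun _ hi _ hij => mul_self_mem_of_repr_ne_zero hb hI hi hij

theorem le_idealOf_hSet (hI : IsEvolIdeal I) : I ≤ idealOf b (hSet b I) := by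
  intro x hx
  rw [idealOf, Module.Basis.mem_span_image]
  intro i hi
  exact mul_self_mem_of_repr_ne_zero hb hI hx (by simpa using hi)

end hSet

section IsMaxIdeal

variable {b : Module.Basis ι K A} (hb : IsNaturalBasis b) {I : Submodule K A}
include hb

theorem mul_mem_of_mem_sup_span_basis (hI : IsEvolIdeal I) {i : ι} (hi : i ∈ hSet b I) (a : A)
    {x : A} (hx : x ∈ I ⊔ K ∙ b i) : a * x ∈ I := by
  obtain ⟨y, hy, z, hz, rfl⟩ := Submodule.mem_sup.mp hx
  obtain ⟨d, rfl⟩ := Submodule.mem_span_singleton.mp hz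
  rw [mul_add, mul_smul_comm, hb.mul_basis]
  exact I.add_mem (hI _ _ hy) (I.smul_mem _ (I.smul_mem _ hi))

theorem idealOf_hSet_le (hperf : sqIdeal K A = ⊤) (hI : IsMaxIdeal I) :
    idealOf b (hSet b I) ≤ I := by
  obtain ⟨hId, hne, hmax⟩ := hI
  rw [idealOf, Submodule.span_le]
  rintro _ ⟨i, hi, rfl⟩
  by_contra hbi
  have hmul := mul_mem_of_mem_sup_span_basis hb hId hi
  have hJ : IsEvolIdeal (I ⊔ K ∙ b i) := fun a x hx => Submodule.mem_sup_left (hmul a hx)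
  rcases hmax _ hJ le_sup_left with h | h
  · exact hbi (h ▸ Submodule.mem_sup_right (Submodule.mem_span_singleton_self _))
  · refine hne (top_le_iff.mp ?_)
    rw [← hperf, sqIdeal, Submodule.span_le]
    rintro _ ⟨a, c, rfl⟩
    exact hmul a (h ▸ Submodule.mem_top)

end IsMaxIdeal

theorem stmt11 (b : Module.Basis ι K A) (hb : IsNaturalBasis b)
    (hperf : sqIdeal K A = ⊤) (I : Submodule K A) (hI : IsMaxIdeal I) :
    ∃ H : Set ι, EvolHereditary b H ∧ H ≠ Set.univ ∧
      (∀ H' : Set ι, EvolHereditary b H' → H ⊆ H' → H' = H ∨ H' = Set.univ) ∧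
      I = idealOf b H ∧ H = hSet b I := by
  have hIeq : I = idealOf b (hSet b I) :=
    le_antisymm (le_idealOf_hSet hb hI.1) (idealOf_hSet_le hb hperf hI)
  obtain ⟨hId, hne, hmax⟩ := hI
  refine ⟨hSet b I, evolHereditary_hSet hb hId, ?_, ?_, hIeq, rfl⟩
  · intro huniv
    exact hne (by rw [hIeq, huniv, idealOf_univ])
  · intro H' hH' hsub
    rcases hmax _ (isEvolIdeal_idealOf hb hH') (hIeq.trans_le (idealOf_mono b hsub)) with h | h
    · exact .inl (idealOf_injective b (h.trans hIeq))
    · exact .inr (idealOf_injective b (h.trans (idealOf_univ b).symm))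
end

section
/- Let A be a non-degenerate evolution algebra and H a hereditary and saturated subset of the vertex set of its associated graph. Then the ideal I_H = span(H) has the absorption property. -/
/-!
For a natural basis, `x * e i = x_i • (e i)²`. So if `x * A ⊆ I_H` and `x_i ≠ 0`, then
`(e i)² ∈ I_H`, i.e. every edge-target of `i` lies in `H`; since `(e i)² ≠ 0`, saturation puts
`i` in `H`. Thus the support of `x` lies in `H`, which means `x ∈ I_H`.
-/

variable {K ι A : Type*}

variable [Field K] [NonUnitalNonAssocCommRing A] [Module K A]
  [SMulCommClass K A A] [IsScalarTower K A A]

namespace IsNaturalBasis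

omit [SMulCommClass K A A] in
theorem mul_basis_s16 {b : Module.Basis ι K A} (hb : IsNaturalBasis b) (x : A) (i : ι) :
    x * b i = b.repr x i • (b i * b i) := by
  conv_lhs => rw [← b.linearCombination_repr x, Finsupp.linearCombination_apply]
  rw [Finsupp.sum, Finset.sum_mul, Finset.sum_eq_single i]
  · rw [smul_mul_assoc]
  · intro j _ hj
    rw [smul_mul_assoc, hb j i hj, smul_zero]
  · intro h
    rw [Finsupp.notMem_support_iff.mp h, zero_smul, zero_mul]

end IsNaturalBasis

omit [SMulCommClass K A A] [IsScalarTower K A A] in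
theorem mem_idealOf_iff {b : Module.Basis ι K A} {H : Set ι} {x : A} :
    x ∈ idealOf b H ↔ ∀ j, b.repr x j ≠ 0 → j ∈ H := by
  simp only [idealOf, Module.Basis.mem_span_image, Set.subset_def, Finset.mem_coe,
    Finsupp.mem_support_iff]

omit [SMulCommClass K A A] [IsScalarTower K A A] in
theorem EvolSaturated.mem_of_sq_mem_idealOf {b : Module.Basis ι K A} {H : Set ι}
    (hs : EvolSaturated b H) {i : ι} (hi : b i * b i ≠ 0) (hsq : b i * b i ∈ idealOf b H) :
    i ∈ H :=
  hs i hi (mem_idealOf_iff.mp hsq)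

theorem stmt16_general (b : Module.Basis ι K A) (hb : IsNaturalBasis b)
    (hnd : ∀ i : ι, b i * b i ≠ 0) (H : Set ι)
    (hs : EvolSaturated b H) :
    Absorption (idealOf b H) := by
  intro x hx
  refine mem_idealOf_iff.mpr fun i hxi => hs.mem_of_sq_mem_idealOf (hnd i) ?_
  have hxbi : b.repr x i • (b i * b i) ∈ idealOf b H := hb.mul_basis_s16 x i ▸ hx (b i)
  exact (Submodule.smul_mem_iff _ hxi).mp hxbi

theorem stmt16 (b : Module.Basis ι K A) (hb : IsNaturalBasis b)
    (hnd : ∀ i : ι, b i * b i ≠ 0) (H : Set ι)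
    (hH : EvolHereditary b H) (hs : EvolSaturated b H) :
    Absorption (idealOf b H) :=
  stmt16_general b hb hnd H hs
end
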